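/- arXiv:1611.06496 — 3 statements merged into one kernel-verified Lean document; each statement's English description precedes it below -/
import Mathlib

section
/- Let V be a real inner product space of even dimension n = 2m and let J be an orthogonal complex structure on V. Then the real vector space of all skew-adjoint endomorphisms of V that anticommute with J (i.e., the tangent space T_J F(V) of the manifold F(V) of orthogonal complex structures) has dimension m² − m. -/
/-!
An orthogonal complex structure `J` admits an orthonormal basis `e₁, …, eₘ, Je₁, …, Jeₘ`: choose
the `eᵢ` greedily, each a unit vector orthogonal to all earlier `eⱼ` and `Jeⱼ`. In such a basis `J`
has the matrix `[[0, -1], [1, 0]]`, and a skew-symmetric matrix anticommutes with it exactly when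
it has the form `[[A, B], [B, -A]]` with `A` and `B` skew-symmetric. Hence the tangent space has
dimension `2 · (m choose 2) = m² - m`.
-/

open scoped RealInnerProductSpace
open Matrix Module

/-- The tangent space `T_J F(V)`: the submodule of skew-adjoint endomorphisms of `V`
that anticommute with `J`. -/
def tangentSpaceAt {V : Type*} [NormedAddCommGroup V] [InnerProductSpace ℝ V]
    (J : V →ₗ[ℝ] V) : Submodule ℝ (V →ₗ[ℝ] V) where
  carrier := {Q | (∀ x y : V, ⟪Q x, y⟫ = -⟪x, Q y⟫) ∧ Q ∘ₗ J = -(J ∘ₗ Q)}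
  add_mem' := by
    rintro A B ⟨hA1, hA2⟩ ⟨hB1, hB2⟩
    refine ⟨fun x y => ?_, ?_⟩
    · simp only [LinearMap.add_apply, inner_add_left, inner_add_right, hA1 x y, hB1 x y]
      ring
    · rw [LinearMap.add_comp, LinearMap.comp_add, hA2, hB2, neg_add]
  zero_mem' := by
    refine ⟨fun x y => by simp, ?_⟩
    rw [LinearMap.zero_comp, LinearMap.comp_zero, neg_zero]
  smul_mem' := by
    rintro c A ⟨hA1, hA2⟩
    refine ⟨fun x y => ?_, ?_⟩
    · simp only [LinearMap.smul_apply, real_inner_smul_left, real_inner_smul_right, hA1 x y]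
      ring
    · rw [LinearMap.smul_comp, LinearMap.comp_smul, hA2, smul_neg]

section SkewSymmetric

variable (n K : Type*) [CommRing K]

def skewSymmetricMatrices : Submodule K (Matrix n n K) :=
  LinearMap.ker ((transposeLinearEquiv n n K K).toLinearMap + LinearMap.id)

variable {n K}

theorem mem_skewSymmetricMatrices {A : Matrix n n K} :
    A ∈ skewSymmetricMatrices n K ↔ Aᵀ = -A := by
  simp [skewSymmetricMatrices, add_eq_zero_iff_eq_neg]

section LinearOrder

variable [LinearOrder n]

def skewOfUpper (f : {p : n × n // p.1 < p.2} → K) : Matrix n n K :=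
  Matrix.of fun i j =>
    if h : i < j then f ⟨(i, j), h⟩ else if h : j < i then -f ⟨(j, i), h⟩ else 0

theorem skewOfUpper_mem (f : {p : n × n // p.1 < p.2} → K) :
    skewOfUpper f ∈ skewSymmetricMatrices n K := by
  rw [mem_skewSymmetricMatrices]
  ext i j
  rcases lt_trichotomy i j with h | rfl | h
  · simp [skewOfUpper, h, h.not_gt]
  · simp [skewOfUpper]
  · simp [skewOfUpper, h, h.not_gt]

variable [IsAddTorsionFree K]

theorem skewOfUpper_eq_of_mem {A : Matrix n n K} (hA : A ∈ skewSymmetricMatrices n K) :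
    skewOfUpper (fun p => A p.1.1 p.1.2) = A := by
  rw [mem_skewSymmetricMatrices] at hA
  ext i j
  have hij : A i j = -A j i := by simpa using congrFun₂ hA j i
  rcases lt_trichotomy i j with h | rfl | h
  · simp [skewOfUpper, h]
  · simp [skewOfUpper, (self_eq_neg.mp hij).symm]
  · simp [skewOfUpper, h, h.not_gt, hij]

def skewSymmetricEquivUpper :
    skewSymmetricMatrices n K ≃ₗ[K] ({p : n × n // p.1 < p.2} → K) where
  toFun A p := (A : Matrix n n K) p.1.1 p.1.2
  map_add' _ _ := rfl
  map_smul' _ _ := rfl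
  invFun f := ⟨skewOfUpper f, skewOfUpper_mem f⟩
  left_inv A := Subtype.ext (skewOfUpper_eq_of_mem A.2)
  right_inv f := funext fun p => by simp [skewOfUpper, p.2]

end LinearOrder

theorem finrank_skewSymmetricMatrices {K : Type*} [Field K] [CharZero K] [Fintype n] :
    finrank K (skewSymmetricMatrices n K) = (Fintype.card n).choose 2 := by
  classical
  let _ : LinearOrder n := LinearOrder.lift' _ (Fintype.equivFin n).injective
  rw [skewSymmetricEquivUpper.finrank_eq, finrank_fintype_fun_eq_card, Fintype.card_subtype,
    Fintype.card_product_filter_lt]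

end SkewSymmetric

section Anticommutant

variable {n K : Type*} [CommRing K]

def skewAnticommutant {ι : Type*} [Fintype ι] (J : Matrix ι ι K) : Submodule K (Matrix ι ι K) :=
  skewSymmetricMatrices ι K ⊓ LinearMap.ker (LinearMap.mulRight K J + LinearMap.mulLeft K J)

theorem mem_skewAnticommutant {ι : Type*} [Fintype ι] {J M : Matrix ι ι K} :
    M ∈ skewAnticommutant J ↔ Mᵀ = -M ∧ M * J = -(J * M) := by
  simp [skewAnticommutant, mem_skewSymmetricMatrices, add_eq_zero_iff_eq_neg]

def skewAnticommutantParam :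
    skewSymmetricMatrices n K × skewSymmetricMatrices n K →ₗ[K] Matrix (n ⊕ n) (n ⊕ n) K where
  toFun p := fromBlocks p.1 p.2 p.2 (-p.1)
  map_add' p q := by simp [fromBlocks_add, add_comm]
  map_smul' c p := by simp [fromBlocks_smul]

theorem skewAnticommutantParam_injective :
    Function.Injective (skewAnticommutantParam (n := n) (K := K)) := by
  rintro ⟨A, B⟩ ⟨A', B'⟩ h
  simp only [skewAnticommutantParam, LinearMap.coe_mk, AddHom.coe_mk, fromBlocks_inj] at h
  exact Prod.ext (Subtype.ext h.1) (Subtype.ext h.2.1)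

variable (n K) [Fintype n] [DecidableEq n]

/-- The matrix of multiplication by `i` on `ℂⁿ` in the real basis `e₁, …, eₙ, i e₁, …, i eₙ`. -/
def stdComplexStructure : Matrix (n ⊕ n) (n ⊕ n) K :=
  fromBlocks 0 (-1) 1 0

variable {n K}

theorem fromBlocks_mem_skewAnticommutant_iff {A B C D : Matrix n n K} :
    fromBlocks A B C D ∈ skewAnticommutant (stdComplexStructure n K) ↔
      Aᵀ = -A ∧ Bᵀ = -B ∧ C = B ∧ D = -A := by
  simp only [mem_skewAnticommutant, stdComplexStructure, fromBlocks_transpose,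
    fromBlocks_multiply, fromBlocks_neg, fromBlocks_inj]
  simp only [Matrix.mul_zero, Matrix.zero_mul, Matrix.mul_one, Matrix.one_mul, Matrix.mul_neg,
    Matrix.neg_mul, zero_add, add_zero, neg_neg]
  constructor
  · rintro ⟨⟨hA, -, hB, -⟩, hBC, hDA, -, -⟩
    exact ⟨hA, hBC ▸ hB, hBC.symm, hDA.symm⟩
  · rintro ⟨hA, hB, rfl, rfl⟩
    simp [hA, hB]

theorem range_skewAnticommutantParam :
    LinearMap.range skewAnticommutantParam = skewAnticommutant (stdComplexStructure n K) := by
  ext M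
  constructor
  · rintro ⟨⟨A, B⟩, rfl⟩
    exact fromBlocks_mem_skewAnticommutant_iff.mpr
      ⟨mem_skewSymmetricMatrices.mp A.2, mem_skewSymmetricMatrices.mp B.2, rfl, rfl⟩
  · intro hM
    rw [← fromBlocks_toBlocks M] at hM ⊢
    obtain ⟨hA, hB, hC, hD⟩ := fromBlocks_mem_skewAnticommutant_iff.mp hM
    refine ⟨⟨⟨_, mem_skewSymmetricMatrices.mpr hA⟩, ⟨_, mem_skewSymmetricMatrices.mpr hB⟩⟩, ?_⟩
    simp [skewAnticommutantParam, hC, hD]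

theorem finrank_skewAnticommutant_stdComplexStructure {K : Type*} [Field K] [CharZero K] :
    finrank K (skewAnticommutant (stdComplexStructure n K)) = 2 * (Fintype.card n).choose 2 := by
  rw [← range_skewAnticommutantParam,
    LinearMap.finrank_range_of_inj skewAnticommutantParam_injective, finrank_prod,
    finrank_skewSymmetricMatrices, two_mul]

theorem LinearMap.toMatrix_eq_stdComplexStructure {M : Type*} [AddCommGroup M] [Module K M]
    (b : Basis (n ⊕ n) K M) {J : M →ₗ[K] M} (hJ2 : J ∘ₗ J = -LinearMap.id)
    (hb : ∀ i, b (.inr i) = J (b (.inl i))) :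
    LinearMap.toMatrix b b J = stdComplexStructure n K := by
  have hJinr (i : n) : J (b (.inr i)) = -b (.inl i) := by
    rw [hb, ← LinearMap.comp_apply, hJ2]
    rfl
  ext i (j | j) <;> cases i <;>
    simp [LinearMap.toMatrix_apply, stdComplexStructure, hJinr, ← hb, Finsupp.single_apply,
      one_apply, eq_comm]

end Anticommutant

theorem two_mul_choose_two (m : ℕ) : 2 * m.choose 2 = m ^ 2 - m := by
  rw [Nat.choose_two_right, Nat.mul_div_cancel' (Nat.even_mul_pred_self m).two_dvd,
    Nat.mul_sub_one, sq]

section InnerProductSpace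

variable {V : Type*} [NormedAddCommGroup V] [InnerProductSpace ℝ V]

theorem exists_norm_eq_one_forall_inner_eq_zero [FiniteDimensional ℝ V] {ι : Type*} [Fintype ι]
    (w : ι → V) (hcard : Fintype.card ι < finrank ℝ V) :
    ∃ e : V, ‖e‖ = 1 ∧ ∀ i, ⟪w i, e⟫ = 0 := by
  have hspan : Submodule.span ℝ (Set.range w) ≠ ⊤ := fun h => by
    have := finrank_range_le_card (R := ℝ) w
    rw [Set.finrank, h, finrank_top] at this
    omega
  obtain ⟨x, hxU, hx⟩ := Submodule.exists_mem_ne_zero_of_ne_bot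
    (mt Submodule.orthogonal_eq_bot_iff.mp hspan)
  refine ⟨‖x‖⁻¹ • x, norm_smul_inv_norm hx, fun i => ?_⟩
  rw [real_inner_smul_right, Submodule.inner_right_of_mem_orthogonal
    (Submodule.subset_span (Set.mem_range_self i)) hxU, mul_zero]

theorem Orthonormal.cons {k : ℕ} {v : Fin k → V} (hv : Orthonormal ℝ v) {e : V} (he : ‖e‖ = 1)
    (hev : ∀ i, ⟪v i, e⟫ = 0) : Orthonormal ℝ (Fin.cons e v : Fin (k + 1) → V) := by
  rw [orthonormal_iff_ite] at hv ⊢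
  simp [Fin.forall_fin_succ, Fin.succ_ne_zero, fun i : Fin k => (Fin.succ_ne_zero i).symm, hv,
    hev, real_inner_comm _ e, he]

section Skew

variable {J : V →ₗ[ℝ] V} (hskew : ∀ x y : V, ⟪J x, y⟫ = -⟪x, J y⟫)
include hskew

theorem inner_self_map_eq_zero_of_skew (x : V) : ⟪x, J x⟫ = 0 := by
  have := hskew x x
  rw [real_inner_comm] at this
  linarith

theorem exists_orthonormal_isotropic [FiniteDimensional ℝ V] :
    ∀ k, 2 * k ≤ finrank ℝ V → ∃ v : Fin k → V, Orthonormal ℝ v ∧ ∀ i j, ⟪v i, J (v j)⟫ = 0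
  | 0, _ => ⟨Fin.elim0, .of_isEmpty _, fun i => i.elim0⟩
  | k + 1, hk => by
    obtain ⟨v, hv, hvJv⟩ := exists_orthonormal_isotropic k (by omega)
    obtain ⟨e, he, hwe⟩ := exists_norm_eq_one_forall_inner_eq_zero (Sum.elim v (J ∘ v))
      (by simp; omega)
    have hve : ∀ i, ⟪v i, e⟫ = 0 := fun i => hwe (.inl i)
    have hJve : ∀ i, ⟪J (v i), e⟫ = 0 := fun i => hwe (.inr i)
    refine ⟨Fin.cons e v, hv.cons he hve, ?_⟩
    simp only [Fin.forall_fin_succ, Fin.cons_zero, Fin.cons_succ,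
      inner_self_map_eq_zero_of_skew hskew, hvJv]
    exact ⟨⟨trivial, fun i => by rw [real_inner_comm, hJve]⟩,
      fun i => ⟨by rw [← neg_eq_zero, ← hskew, hJve], fun _ => trivial⟩⟩

theorem Orthonormal.sum_elim_comp {ι : Type*} {v : ι → V} (hv : Orthonormal ℝ v)
    (hvJv : ∀ i j, ⟪v i, J (v j)⟫ = 0) (hJ2 : J ∘ₗ J = -LinearMap.id) :
    Orthonormal ℝ (Sum.elim v (J ∘ v)) := by
  classical
  have hJJ (x y : V) : ⟪J x, J y⟫ = ⟪x, y⟫ := by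
    rw [hskew, ← LinearMap.comp_apply, hJ2]
    simp
  rw [orthonormal_iff_ite] at hv ⊢
  rintro (i | i) (j | j)
  · simp [hv]
  · simp [hvJv]
  · simp [real_inner_comm, hvJv]
  · simp [hJJ, hv]

theorem exists_orthonormalBasis_sum_elim_comp [FiniteDimensional ℝ V]
    (hJ2 : J ∘ₗ J = -LinearMap.id) {m : ℕ} (hdim : finrank ℝ V = 2 * m) :
    ∃ b : OrthonormalBasis (Fin m ⊕ Fin m) ℝ V, ∀ i, b (.inr i) = J (b (.inl i)) := by
  obtain ⟨v, hv, hvJv⟩ := exists_orthonormal_isotropic hskew m hdim.ge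
  have hon := hv.sum_elim_comp hskew hvJv hJ2
  have hcard : Fintype.card (Fin m ⊕ Fin m) = finrank ℝ V := by simp [hdim, two_mul]
  exact ⟨.mk hon (hon.linearIndependent.span_eq_top_of_card_eq_finrank' hcard).ge,
    fun i => by simp⟩

end Skew

variable [FiniteDimensional ℝ V]

theorem skew_iff_adjoint_eq_neg {Q : V →ₗ[ℝ] V} :
    (∀ x y : V, ⟪Q x, y⟫ = -⟪x, Q y⟫) ↔ LinearMap.adjoint Q = -Q := by
  rw [eq_comm, LinearMap.eq_adjoint_iff]
  simp only [LinearMap.neg_apply, inner_neg_left, neg_eq_iff_eq_neg]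

theorem map_toMatrix_tangentSpaceAt {ι : Type*} [Fintype ι] [DecidableEq ι]
    (b : OrthonormalBasis ι ℝ V) (J : V →ₗ[ℝ] V) :
    (tangentSpaceAt J).map
        (LinearMap.toMatrix b.toBasis b.toBasis : (V →ₗ[ℝ] V) →ₗ[ℝ] Matrix ι ι ℝ) =
      skewAnticommutant (LinearMap.toMatrix b.toBasis b.toBasis J) := by
  set e := LinearMap.toMatrix b.toBasis b.toBasis
  ext M
  obtain ⟨Q, rfl⟩ := e.surjective M
  rw [Submodule.mem_map_equiv, e.symm_apply_apply, mem_skewAnticommutant]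
  refine and_congr ?_ ?_
  · rw [skew_iff_adjoint_eq_neg, ← conjTranspose_eq_transpose_of_trivial,
      ← LinearMap.toMatrix_adjoint, ← map_neg, e.injective.eq_iff]
  · rw [← LinearMap.toMatrix_comp, ← LinearMap.toMatrix_comp, ← map_neg, e.injective.eq_iff]

end InnerProductSpace

/-- Let `V` be a real inner product space of even dimension `n = 2m` and
let `J` be an orthogonal complex structure on `V`.  Then the real vector space of
skew-adjoint endomorphisms of `V` anticommuting with `J` has dimension `m² - m`. -/
theorem stmt_2 {V : Type*} [NormedAddCommGroup V] [InnerProductSpace ℝ V]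
    [FiniteDimensional ℝ V] (m : ℕ) (hdim : Module.finrank ℝ V = 2 * m)
    (J : V →ₗ[ℝ] V) (hJskew : ∀ x y : V, ⟪J x, y⟫ = -⟪x, J y⟫)
    (hJ2 : J ∘ₗ J = -LinearMap.id) :
    Module.finrank ℝ (tangentSpaceAt J) = m ^ 2 - m := by
  obtain ⟨b, hb⟩ := exists_orthonormalBasis_sum_elim_comp hJskew hJ2 hdim
  rw [← (LinearMap.toMatrix b.toBasis b.toBasis).finrank_map_eq, map_toMatrix_tangentSpaceAt,
    LinearMap.toMatrix_eq_stdComplexStructure b.toBasis hJ2 (by simpa using hb),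
    finrank_skewAnticommutant_stdComplexStructure, Fintype.card_fin, two_mul_choose_two]
end

section
/- Let V be a finite-dimensional real inner product space. If J₁ and J₂ are two orthogonal complex structures on V, then there exists an orthogonal linear automorphism Q of V with J₂ = Q ∘ J₁ ∘ Q⁻¹; that is, the orthogonal group O(V) acts transitively by conjugation on the set F(V) of orthogonal complex structures on V. -/
/-!
An orthogonal complex structure `J` makes `V` a complex vector space, `(a + b i) • v = a v + b J v`,
and since `J` is an isometry with `⟪J v, v⟫ = 0` the norm of `V` is a complex norm satisfying the
parallelogram law, i.e. the norm of a complex inner product space. Two such spaces of the same real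
dimension have the same complex dimension, so orthonormal bases give a `ℂ`-linear isometry between
them; being `ℂ`-linear, it intertwines multiplication by `i`, that is, the two complex structures.
-/

open scoped RealInnerProductSpace

open Module

section

variable {V : Type*} [NormedAddCommGroup V] [InnerProductSpace ℝ V]

structure IsOrthogonalComplexStructure (J : V →ₗ[ℝ] V) : Prop where
  inner_map_left : ∀ x y : V, ⟪J x, y⟫ = -⟪x, J y⟫
  comp_self : J ∘ₗ J = -LinearMap.id

namespace IsOrthogonalComplexStructure

variable {J : V →ₗ[ℝ] V}

theorem apply_apply (hJ : IsOrthogonalComplexStructure J) (x : V) : J (J x) = -x := by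
  simpa using LinearMap.congr_fun hJ.comp_self x

theorem inner_map_map (hJ : IsOrthogonalComplexStructure J) (x y : V) : ⟪J x, J y⟫ = ⟪x, y⟫ := by
  rw [hJ.inner_map_left, hJ.apply_apply, inner_neg_right, neg_neg]

theorem inner_map_self (hJ : IsOrthogonalComplexStructure J) (x : V) : ⟪J x, x⟫ = 0 := by
  have h := hJ.inner_map_left x x
  rw [real_inner_comm (J x) x] at h
  linarith

theorem norm_smul_add_smul_map (hJ : IsOrthogonalComplexStructure J) (a b : ℝ) (x : V) :
    ‖a • x + b • J x‖ = √(a ^ 2 + b ^ 2) * ‖x‖ := by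
  have hsq : ‖a • x + b • J x‖ ^ 2 = (a ^ 2 + b ^ 2) * ‖x‖ ^ 2 := by
    rw [← real_inner_self_eq_norm_sq, ← real_inner_self_eq_norm_sq, inner_add_add_self]
    simp only [real_inner_smul_left, real_inner_smul_right, hJ.inner_map_map, hJ.inner_map_self,
      real_inner_comm (J x) x]
    ring
  rw [← Real.sqrt_sq (norm_nonneg _), hsq, Real.sqrt_mul (by positivity),
    Real.sqrt_sq (norm_nonneg _)]

end IsOrthogonalComplexStructure

def WithComplexStructure (_J : V →ₗ[ℝ] V) : Type _ := V

namespace WithComplexStructure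

variable (J : V →ₗ[ℝ] V)

instance : NormedAddCommGroup (WithComplexStructure J) := inferInstanceAs (NormedAddCommGroup V)
instance : InnerProductSpace ℝ (WithComplexStructure J) := inferInstanceAs (InnerProductSpace ℝ V)
instance [FiniteDimensional ℝ V] : FiniteDimensional ℝ (WithComplexStructure J) :=
  inferInstanceAs (FiniteDimensional ℝ V)

def equiv : V ≃ₗᵢ[ℝ] WithComplexStructure J := LinearIsometryEquiv.refl ℝ V

variable [hJ : Fact (IsOrthogonalComplexStructure J)]

noncomputable instance : Module ℂ (WithComplexStructure J) :=
  Module.compHom V (Complex.lift ⟨J, hJ.out.comp_self⟩).toRingHom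

theorem complex_smul_def (c : ℂ) (w : WithComplexStructure J) :
    c • w = c.re • w + c.im • equiv J (J ((equiv J).symm w)) := by
  change Complex.lift ⟨J, hJ.out.comp_self⟩ c w = _
  simp only [Complex.lift, Equiv.coe_fn_mk, Complex.liftAux_apply]
  rfl

theorem I_smul (w : WithComplexStructure J) : Complex.I • w = equiv J (J ((equiv J).symm w)) := by
  simp [complex_smul_def]

instance : IsScalarTower ℝ ℂ (WithComplexStructure J) :=
  ⟨fun r c w => by
    rw [complex_smul_def, complex_smul_def, Complex.real_smul, Complex.re_ofReal_mul,
      Complex.im_ofReal_mul, smul_add, smul_smul, smul_smul]⟩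

noncomputable instance : NormedSpace ℂ (WithComplexStructure J) where
  norm_smul_le c w := by
    rw [complex_smul_def, Complex.norm_eq_sqrt_sq_add_sq]
    exact (hJ.out.norm_smul_add_smul_map c.re c.im w).le

instance [FiniteDimensional ℝ V] : FiniteDimensional ℂ (WithComplexStructure J) :=
  Module.Finite.right ℝ ℂ (WithComplexStructure J)

theorem two_mul_finrank [FiniteDimensional ℝ V] :
    2 * finrank ℂ (WithComplexStructure J) = finrank ℝ V := by
  rw [← Complex.finrank_real_complex, Module.finrank_mul_finrank]
  rfl

end WithComplexStructure

theorem nonempty_linearIsometryEquiv_of_finrank_eq {𝕜 E F : Type*} [RCLike 𝕜]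
    [NormedAddCommGroup E] [NormedSpace 𝕜 E] [InnerProductSpaceable E] [FiniteDimensional 𝕜 E]
    [NormedAddCommGroup F] [NormedSpace 𝕜 F] [InnerProductSpaceable F] [FiniteDimensional 𝕜 F]
    (h : finrank 𝕜 E = finrank 𝕜 F) : Nonempty (E ≃ₗᵢ[𝕜] F) := by
  let := InnerProductSpace.ofNorm 𝕜 (E := E) InnerProductSpaceable.parallelogram_identity
  let := InnerProductSpace.ofNorm 𝕜 (E := F) InnerProductSpaceable.parallelogram_identity
  exact ⟨(stdOrthonormalBasis 𝕜 E).equiv (stdOrthonormalBasis 𝕜 F) (finCongr h)⟩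

theorem IsOrthogonalComplexStructure.exists_linearIsometryEquiv_intertwining {W : Type*}
    [NormedAddCommGroup W] [InnerProductSpace ℝ W] [FiniteDimensional ℝ V] [FiniteDimensional ℝ W]
    {J : V →ₗ[ℝ] V} {K : W →ₗ[ℝ] W} (hJ : IsOrthogonalComplexStructure J)
    (hK : IsOrthogonalComplexStructure K) (h : finrank ℝ V = finrank ℝ W) :
    ∃ Q : V ≃ₗᵢ[ℝ] W, ∀ x, Q (J x) = K (Q x) := by
  have := Fact.mk hJ
  have := Fact.mk hK
  have hdim : finrank ℂ (WithComplexStructure J) = finrank ℂ (WithComplexStructure K) := by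
    have := WithComplexStructure.two_mul_finrank J
    have := WithComplexStructure.two_mul_finrank K
    omega
  obtain ⟨f⟩ := nonempty_linearIsometryEquiv_of_finrank_eq hdim
  let fℝ : WithComplexStructure J ≃ₗᵢ[ℝ] WithComplexStructure K :=
    { f.toLinearEquiv.restrictScalars ℝ with norm_map' := f.norm_map }
  refine ⟨(WithComplexStructure.equiv J).trans (fℝ.trans (WithComplexStructure.equiv K).symm),
    fun x => ?_⟩
  have hI := f.map_smul Complex.I (WithComplexStructure.equiv J x)
  rw [WithComplexStructure.I_smul, WithComplexStructure.I_smul] at hI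
  exact congrArg (WithComplexStructure.equiv K).symm hI

end

/-- Let `V` be a finite-dimensional real inner product space.  If `J₁` and
`J₂` are two orthogonal complex structures on `V`, then there exists an orthogonal linear
automorphism (linear isometry equivalence) `Q` of `V` with `J₂ = Q ∘ J₁ ∘ Q⁻¹`:
the orthogonal group acts transitively by conjugation on the orthogonal complex structures. -/
theorem stmt_3 {V : Type*} [NormedAddCommGroup V] [InnerProductSpace ℝ V]
    [FiniteDimensional ℝ V]
    (J₁ J₂ : V →ₗ[ℝ] V)
    (hJ₁skew : ∀ x y : V, ⟪J₁ x, y⟫ = -⟪x, J₁ y⟫) (hJ₁2 : J₁ ∘ₗ J₁ = -LinearMap.id)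
    (hJ₂skew : ∀ x y : V, ⟪J₂ x, y⟫ = -⟪x, J₂ y⟫) (hJ₂2 : J₂ ∘ₗ J₂ = -LinearMap.id) :
    ∃ Q : V ≃ₗᵢ[ℝ] V, ∀ x : V, J₂ x = Q (J₁ (Q.symm x)) := by
  obtain ⟨Q, hQ⟩ := IsOrthogonalComplexStructure.exists_linearIsometryEquiv_intertwining
    ⟨hJ₁skew, hJ₁2⟩ ⟨hJ₂skew, hJ₂2⟩ rfl
  exact ⟨Q, fun x => by rw [hQ, Q.apply_symm_apply]⟩
end

section
/- Let V be a real inner product space of dimension n = 2m, let J be an orthogonal complex structure on V, and let e₁, …, e_{2m} be an orthonormal basis of V with J e_{2k−1} = e_{2k} for k = 1, …, m. Define S_{a,b} e_c = √(n/2)·(δ_{ac} e_b − δ_{bc} e_a), and for 1 ≤ r < s ≤ m set A_{r,s} = (1/√2)(S_{2r−1,2s−1} − S_{2r,2s}) and B_{r,s} = (1/√2)(S_{2r−1,2s} + S_{2r,2s−1}). Then { A_{r,s}, B_{r,s} : 1 ≤ r < s ≤ m } is a G-orthonormal basis of the space of skew-adjoint endomorphisms of V anticommuting with J, and B_{r,s}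 = J ∘ A_{r,s} for all r < s. -/
open scoped RealInnerProductSpace

/-- The index `2k-1` (1-based), i.e. `2k` (0-based), in `Fin (2m)`. -/
def oddIdx {m : ℕ} (k : Fin m) : Fin (2 * m) := ⟨2 * k.1, by omega⟩

/-- The index `2k` (1-based), i.e. `2k+1` (0-based), in `Fin (2m)`. -/
def evenIdx {m : ℕ} (k : Fin m) : Fin (2 * m) := ⟨2 * k.1 + 1, by omega⟩

/-!
Write `wedge u v` for the skew operator `x ↦ ⟪u, x⟫ v - ⟪v, x⟫ u`, so that
`S_{a,b} = √m · wedge e_a e_b`, and `antiWedge J u v = wedge u v - wedge (J u) (J v)`, which is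
twice the part of `wedge u v` anticommuting with `J`. Then `A_{r,s} = √(m/2) · antiWedge J o_r o_s`
with `o_k = e_{2k-1}`, and the identity `J ∘ antiWedge J u v = antiWedge J u (J v)` gives
`B_{r,s} = J ∘ A_{r,s}`. For a skew `T` anticommuting with `J`,
`tr (T ∘ antiWedge J u v) = 4 ⟪u, T v⟫`, which turns every value of `G` into an inner product of
basis vectors. For spanning, a skew `Q` anticommuting with `J` satisfies
`4 Q = ∑_c antiWedge J e_c (Q e_c)`; by bilinearity, antisymmetry and
`antiWedge J (J u) v = J ∘ antiWedge J u v`, each `antiWedge J e_c e_d` is `0` or `±` a multiple of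
some `A_{r,s}` or `B_{r,s}`.
-/

theorem LinearMap.apply_apply_mem_of_basis {ι R M N : Type*} [Fintype ι] [CommSemiring R]
    [AddCommMonoid M] [Module R M] [AddCommMonoid N] [Module R N] (b : Module.Basis ι R M)
    (f : M →ₗ[R] M →ₗ[R] N) {p : Submodule R N} (h : ∀ i j, f (b i) (b j) ∈ p) (x y : M) :
    f x y ∈ p := by
  rw [← b.sum_repr x, ← b.sum_repr y]
  simp only [map_sum, map_smul, LinearMap.sum_apply, LinearMap.smul_apply]
  exact Submodule.sum_mem _ fun i _ => Submodule.smul_mem _ _ <|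
    Submodule.sum_mem _ fun j _ => Submodule.smul_mem _ _ (h j i)

section InnerProductSpace

variable {V : Type*} [NormedAddCommGroup V] [InnerProductSpace ℝ V]

def LinearMap.IsSkewSymmetric (T : V →ₗ[ℝ] V) : Prop :=
  ∀ x y, ⟪T x, y⟫ = -⟪x, T y⟫

theorem LinearMap.IsSkewSymmetric.smul {T : V →ₗ[ℝ] V} (hT : T.IsSkewSymmetric) (c : ℝ) :
    (c • T).IsSkewSymmetric := fun x y => by
  simp [real_inner_smul_left, real_inner_smul_right, hT x y]

theorem comp_comp_comp_of_anticomm {J T T' : V →ₗ[ℝ] V} (hJ2 : J ∘ₗ J = -LinearMap.id)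
    (hT : T ∘ₗ J = -(J ∘ₗ T)) : (J ∘ₗ T) ∘ₗ (J ∘ₗ T') = T ∘ₗ T' := by
  have hJJ (x : V) : J (J x) = -x := LinearMap.congr_fun hJ2 x
  ext x
  simp [← LinearMap.comp_apply T J, hT, hJJ]

noncomputable def wedge : V →ₗ[ℝ] V →ₗ[ℝ] V →ₗ[ℝ] V :=
  LinearMap.smulRightₗ ∘ₗ innerₗ V - (LinearMap.smulRightₗ ∘ₗ innerₗ V).flip

@[simp]
theorem wedge_apply (u v x : V) : wedge u v x = ⟪u, x⟫ • v - ⟪v, x⟫ • u := rfl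

theorem wedge_swap (u v : V) : wedge v u = -wedge u v := by
  ext; simp

theorem isSkewSymmetric_wedge (u v : V) : (wedge u v).IsSkewSymmetric := fun x y => by
  simp only [wedge_apply, inner_sub_left, inner_sub_right, real_inner_smul_left,
    real_inner_smul_right, real_inner_comm x]
  ring

theorem trace_comp_wedge [FiniteDimensional ℝ V] (T : V →ₗ[ℝ] V) (u v : V) :
    LinearMap.trace ℝ V (T ∘ₗ wedge u v) = ⟪u, T v⟫ - ⟪v, T u⟫ := by
  have : T ∘ₗ wedge u v = (innerₗ V u).smulRight (T v) - (innerₗ V v).smulRight (T u) := by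
    ext; simp
  simp [this]

theorem sum_wedge_apply_self {ι : Type*} [Fintype ι] (e : OrthonormalBasis ι ℝ V)
    {Q : V →ₗ[ℝ] V} (hQ : Q.IsSkewSymmetric) : ∑ i, wedge (e i) (Q (e i)) = (2 : ℝ) • Q := by
  ext x
  have hsum : ∑ i, ⟪Q (e i), x⟫ • e i = -Q x := by
    simp only [hQ _ x, neg_smul, Finset.sum_neg_distrib, e.sum_repr']
  have hsum' : ∑ i, ⟪e i, x⟫ • Q (e i) = Q x := by
    simp only [← map_smul, ← map_sum, e.sum_repr']
  simp only [LinearMap.sum_apply, wedge_apply, Finset.sum_sub_distrib, hsum, hsum',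
    LinearMap.smul_apply]
  module

theorem OrthonormalBasis.eq_smul_wedge {ι : Type*} [Fintype ι] [DecidableEq ι]
    (e : OrthonormalBasis ι ℝ V) {T : V →ₗ[ℝ] V} {γ : ℝ} {a b : ι}
    (hT : ∀ c, T (e c) = γ • ((if c = a then (1 : ℝ) else 0) • e b -
      (if c = b then (1 : ℝ) else 0) • e a)) :
    T = γ • wedge (e a) (e b) :=
  e.toBasis.ext fun c => by simp [hT, e.inner_eq_ite, eq_comm]

variable {J : V →ₗ[ℝ] V}

noncomputable def antiWedge (J : V →ₗ[ℝ] V) : V →ₗ[ℝ] V →ₗ[ℝ] V →ₗ[ℝ] V :=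
  wedge - wedge.compl₁₂ J J

theorem antiWedge_apply (u v : V) : antiWedge J u v = wedge u v - wedge (J u) (J v) := rfl

theorem antiWedge_swap (u v : V) : antiWedge J v u = -antiWedge J u v := by
  simp only [antiWedge_apply, wedge_swap v, wedge_swap (J v)]
  abel

theorem antiWedge_self (u : V) : antiWedge J u u = 0 := by
  ext; simp [antiWedge_apply]

theorem isSkewSymmetric_antiWedge (u v : V) : (antiWedge J u v).IsSkewSymmetric := fun x y => by
  simp only [antiWedge_apply, LinearMap.sub_apply, inner_sub_left, inner_sub_right,
    isSkewSymmetric_wedge _ _ _ y]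
  ring

theorem LinearMap.IsSkewSymmetric.comp_wedge_comp (hJ : J.IsSkewSymmetric) (u v : V) :
    J ∘ₗ wedge u v ∘ₗ J = -wedge (J u) (J v) := by
  ext x
  simp only [LinearMap.comp_apply, LinearMap.neg_apply, wedge_apply, map_sub, map_smul, hJ _ x,
    neg_smul]
  abel

theorem antiWedge_eq_add_comp (hJ : J.IsSkewSymmetric) (u v : V) :
    antiWedge J u v = wedge u v + J ∘ₗ wedge u v ∘ₗ J := by
  rw [antiWedge_apply, hJ.comp_wedge_comp, sub_eq_add_neg]

theorem antiWedge_comp (hJ : J.IsSkewSymmetric) (hJ2 : J ∘ₗ J = -LinearMap.id) (u v : V) :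
    antiWedge J u v ∘ₗ J = -(J ∘ₗ antiWedge J u v) := by
  have hJJ (x : V) : J (J x) = -x := LinearMap.congr_fun hJ2 x
  ext x
  simp only [antiWedge_apply, LinearMap.comp_apply, LinearMap.sub_apply, LinearMap.neg_apply,
    wedge_apply, map_sub, map_smul, hJ _ x, hJ _ (J x), hJJ, inner_neg_right]
  module

theorem comp_antiWedge (hJ2 : J ∘ₗ J = -LinearMap.id) (u v : V) :
    J ∘ₗ antiWedge J u v = antiWedge J u (J v) := by
  have hJJ (x : V) : J (J x) = -x := LinearMap.congr_fun hJ2 x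
  ext x
  simp only [antiWedge_apply, LinearMap.comp_apply, LinearMap.sub_apply, LinearMap.neg_apply,
    wedge_apply, map_sub, map_smul, map_neg, hJJ]
  module

theorem antiWedge_J_left (hJ2 : J ∘ₗ J = -LinearMap.id) (u v : V) :
    antiWedge J (J u) v = J ∘ₗ antiWedge J u v := by
  have hJJ (x : V) : J (J x) = -x := LinearMap.congr_fun hJ2 x
  ext x
  simp only [antiWedge_apply, LinearMap.comp_apply, LinearMap.sub_apply, LinearMap.neg_apply,
    wedge_apply, map_sub, map_smul, map_neg, hJJ]
  module

theorem trace_comp_antiWedge [FiniteDimensional ℝ V] (hJ : J.IsSkewSymmetric)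
    (hJ2 : J ∘ₗ J = -LinearMap.id) {T : V →ₗ[ℝ] V} (hT : T.IsSkewSymmetric)
    (hTJ : T ∘ₗ J = -(J ∘ₗ T)) (u v : V) :
    LinearMap.trace ℝ V (T ∘ₗ antiWedge J u v) = 4 * ⟪u, T v⟫ := by
  have hJTJ (x : V) : J (T (J x)) = T x := by
    have hJJ (x : V) : J (J x) = -x := LinearMap.congr_fun hJ2 x
    simpa [hJJ] using congrArg J (LinearMap.congr_fun hTJ x)
  have hTswap (x y : V) : ⟪y, T x⟫ = -⟪x, T y⟫ := by rw [← hT, real_inner_comm]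
  rw [antiWedge_apply, LinearMap.comp_sub, map_sub, trace_comp_wedge, trace_comp_wedge,
    hJ, hJTJ, hJ, hJTJ, hTswap u v]
  ring

theorem neg_one_div_mul_trace_smul_antiWedge_comp [FiniteDimensional ℝ V]
    (hJ : J.IsSkewSymmetric) (hJ2 : J ∘ₗ J = -LinearMap.id) {c n : ℝ} (hn : n ≠ 0)
    (hc : 4 * c ^ 2 = n) (u v u' v' : V) :
    -(1 / n) * LinearMap.trace ℝ V ((c • antiWedge J u v) ∘ₗ (c • antiWedge J u' v')) =
      -⟪u', antiWedge J u v v'⟫ := by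
  have hc0 : c ≠ 0 := by rintro rfl; exact hn (by simpa using hc.symm)
  rw [LinearMap.comp_smul, map_smul,
    trace_comp_antiWedge hJ hJ2 ((isSkewSymmetric_antiWedge (J := J) u v).smul c)
      (by rw [LinearMap.smul_comp, antiWedge_comp hJ hJ2, LinearMap.comp_smul, smul_neg]),
    smul_eq_mul, LinearMap.smul_apply, real_inner_smul_right, ← hc]
  field_simp

theorem sum_antiWedge_apply_self {ι : Type*} [Fintype ι] (e : OrthonormalBasis ι ℝ V)
    (hJ : J.IsSkewSymmetric) (hJ2 : J ∘ₗ J = -LinearMap.id) {Q : V →ₗ[ℝ] V}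
    (hQ : Q.IsSkewSymmetric) (hQJ : Q ∘ₗ J = -(J ∘ₗ Q)) :
    ∑ i, antiWedge J (e i) (Q (e i)) = (4 : ℝ) • Q := by
  have hJQJ : J ∘ₗ Q ∘ₗ J = Q := by
    rw [hQJ, LinearMap.comp_neg, ← LinearMap.comp_assoc, hJ2]; simp
  calc ∑ i, antiWedge J (e i) (Q (e i))
      = ∑ i, wedge (e i) (Q (e i)) + J ∘ₗ (∑ i, wedge (e i) (Q (e i))) ∘ₗ J := by
        ext x; simp [antiWedge_eq_add_comp hJ, Finset.sum_add_distrib, map_sum]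
    _ = (4 : ℝ) • Q := by
        rw [sum_wedge_apply_self e hQ, LinearMap.smul_comp, LinearMap.comp_smul, hJQJ]; module

end InnerProductSpace

@[simp]
theorem oddIdx_inj {m : ℕ} {k l : Fin m} : oddIdx k = oddIdx l ↔ k = l := by
  simp [oddIdx, Fin.ext_iff]

@[simp]
theorem oddIdx_ne_evenIdx {m : ℕ} (k l : Fin m) : oddIdx k ≠ evenIdx l := by
  simp only [oddIdx, evenIdx, ne_eq, Fin.ext_iff]; omega

theorem exists_oddIdx_or_evenIdx {m : ℕ} (c : Fin (2 * m)) :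
    (∃ k, oddIdx k = c) ∨ ∃ k, evenIdx k = c := by
  obtain ⟨k, hk | hk⟩ := Nat.even_or_odd' c.1
  · exact Or.inl ⟨⟨k, by omega⟩, Fin.ext (by simp [oddIdx, hk])⟩
  · exact Or.inr ⟨⟨k, by omega⟩, Fin.ext (by simp [evenIdx, hk])⟩

section OrthonormalBasis

variable {V : Type*} [NormedAddCommGroup V] [InnerProductSpace ℝ V] {m : ℕ}
  (e : OrthonormalBasis (Fin (2 * m)) ℝ V) {J : V →ₗ[ℝ] V}

theorem inner_oddIdx_antiWedge_oddIdx (hJe : ∀ k, J (e (oddIdx k)) = e (evenIdx k))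
    (r s r' s' : Fin m) :
    ⟪e (oddIdx r'), antiWedge J (e (oddIdx r)) (e (oddIdx s)) (e (oddIdx s'))⟫ =
      (if r = s' ∧ s = r' then 1 else 0) - (if r = r' ∧ s = s' then 1 else 0) := by
  simp only [antiWedge_apply, hJe, LinearMap.sub_apply, wedge_apply, e.inner_eq_ite, oddIdx_inj,
    ite_smul, one_smul, zero_smul, inner_sub_right]
  split_ifs <;> simp_all [e.inner_eq_ite] <;> grind

theorem inner_oddIdx_antiWedge_evenIdx (hJe : ∀ k, J (e (oddIdx k)) = e (evenIdx k))
    (r s r' s' : Fin m) :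
    ⟪e (oddIdx r'), antiWedge J (e (oddIdx r)) (e (oddIdx s)) (e (evenIdx s'))⟫ = 0 := by
  simp only [antiWedge_apply, hJe, LinearMap.sub_apply, wedge_apply, e.inner_eq_ite,
    oddIdx_ne_evenIdx, if_false, zero_smul, sub_self, ite_smul, one_smul, zero_sub, neg_sub,
    inner_sub_right]
  split_ifs <;> simp [e.inner_eq_ite]

theorem wedge_oddIdx_sub_wedge_evenIdx (hJe : ∀ k, J (e (oddIdx k)) = e (evenIdx k))
    (r s : Fin m) :
    wedge (e (oddIdx r)) (e (oddIdx s)) - wedge (e (evenIdx r)) (e (evenIdx s)) =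
      antiWedge J (e (oddIdx r)) (e (oddIdx s)) := by
  rw [antiWedge_apply, hJe, hJe]

theorem wedge_oddIdx_evenIdx_add_wedge_evenIdx_oddIdx (hJ2 : J ∘ₗ J = -LinearMap.id)
    (hJe : ∀ k, J (e (oddIdx k)) = e (evenIdx k)) (r s : Fin m) :
    wedge (e (oddIdx r)) (e (evenIdx s)) + wedge (e (evenIdx r)) (e (oddIdx s)) =
      antiWedge J (e (oddIdx r)) (e (evenIdx s)) := by
  rw [antiWedge_apply, hJe, ← hJe, ← LinearMap.comp_apply J J, hJ2, LinearMap.neg_apply,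
    LinearMap.id_apply, map_neg, sub_neg_eq_add]

theorem mem_of_antiWedge_mem (hJ : J.IsSkewSymmetric) (hJ2 : J ∘ₗ J = -LinearMap.id)
    (hJe : ∀ k, J (e (oddIdx k)) = e (evenIdx k)) {M : Submodule ℝ (V →ₗ[ℝ] V)}
    (hM : ∀ r s : Fin m, r < s → antiWedge J (e (oddIdx r)) (e (oddIdx s)) ∈ M ∧
      J ∘ₗ antiWedge J (e (oddIdx r)) (e (oddIdx s)) ∈ M)
    {Q : V →ₗ[ℝ] V} (hQ : Q.IsSkewSymmetric) (hQJ : Q ∘ₗ J = -(J ∘ₗ Q)) : Q ∈ M := by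
  have hodd (k l : Fin m) : antiWedge J (e (oddIdx k)) (e (oddIdx l)) ∈ M ∧
      J ∘ₗ antiWedge J (e (oddIdx k)) (e (oddIdx l)) ∈ M := by
    rcases lt_trichotomy k l with h | rfl | h
    · exact hM k l h
    · simp [antiWedge_self]
    · rw [antiWedge_swap, LinearMap.comp_neg]
      exact ⟨M.neg_mem (hM l k h).1, M.neg_mem (hM l k h).2⟩
  have hbasis (a b : Fin (2 * m)) : antiWedge J (e a) (e b) ∈ M := by
    rcases exists_oddIdx_or_evenIdx a with ⟨k, rfl⟩ | ⟨k, rfl⟩ <;>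
      rcases exists_oddIdx_or_evenIdx b with ⟨l, rfl⟩ | ⟨l, rfl⟩
    · exact (hodd k l).1
    · rw [← hJe, ← comp_antiWedge hJ2]; exact (hodd k l).2
    · rw [← hJe, antiWedge_J_left hJ2]; exact (hodd k l).2
    · rw [← hJe, ← hJe, antiWedge_J_left hJ2, ← comp_antiWedge hJ2, ← LinearMap.comp_assoc,
        hJ2, LinearMap.neg_comp, LinearMap.id_comp]
      exact M.neg_mem (hodd k l).1
  have h4Q : (4 : ℝ) • Q ∈ M := by
    rw [← sum_antiWedge_apply_self e hJ hJ2 hQ hQJ]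
    exact M.sum_mem fun i _ =>
      (antiWedge J).apply_apply_mem_of_basis e.toBasis (by simpa using hbasis) _ _
  simpa using M.smul_mem (1 / 4 : ℝ) h4Q

end OrthonormalBasis

/-- Let `V` be a real inner product space of dimension `n = 2m`, `J` an
orthogonal complex structure on `V` and `e₁, …, e_{2m}` an orthonormal basis with
`J e_{2k−1} = e_{2k}`.  With `S_{a,b} e_c = √(n/2)(δ_{ac}e_b − δ_{bc}e_a)`,
`A_{r,s} = (1/√2)(S_{2r−1,2s−1} − S_{2r,2s})` and `B_{r,s} = (1/√2)(S_{2r−1,2s} + S_{2r,2s−1})`,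
the family `{A_{r,s}, B_{r,s} : r < s}` is a `G`-orthonormal basis of the space of
skew-adjoint endomorphisms of `V` anticommuting with `J`, and `B_{r,s} = J ∘ A_{r,s}`. -/
theorem stmt_6 {V : Type*} [NormedAddCommGroup V] [InnerProductSpace ℝ V]
    (m : ℕ) (e : OrthonormalBasis (Fin (2 * m)) ℝ V)
    (J : V →ₗ[ℝ] V) (hJskew : ∀ x y : V, ⟪J x, y⟫ = -⟪x, J y⟫)
    (hJ2 : J ∘ₗ J = -LinearMap.id)
    (hJe : ∀ k : Fin m, J (e (oddIdx k)) = e (evenIdx k))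
    (S : Fin (2 * m) → Fin (2 * m) → (V →ₗ[ℝ] V))
    (hS : ∀ a b c : Fin (2 * m), S a b (e c) =
      Real.sqrt ((2 * m : ℝ) / 2) •
        (((if c = a then (1 : ℝ) else 0) • e b) - ((if c = b then (1 : ℝ) else 0) • e a)))
    (A B : Fin m → Fin m → (V →ₗ[ℝ] V))
    (hA : ∀ r s : Fin m, A r s =
      (Real.sqrt 2)⁻¹ • (S (oddIdx r) (oddIdx s) - S (evenIdx r) (evenIdx s)))
    (hB : ∀ r s : Fin m, B r s =
      (Real.sqrt 2)⁻¹ • (S (oddIdx r) (evenIdx s) + S (evenIdx r) (oddIdx s))) :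
    -- each `A_{r,s}` and `B_{r,s}` is skew-adjoint and anticommutes with `J`
    (∀ r s : Fin m, r < s →
      (∀ x y : V, ⟪A r s x, y⟫ = -⟪x, A r s y⟫) ∧ A r s ∘ₗ J = -(J ∘ₗ A r s) ∧
      (∀ x y : V, ⟪B r s x, y⟫ = -⟪x, B r s y⟫) ∧ B r s ∘ₗ J = -(J ∘ₗ B r s)) ∧
    -- `B_{r,s} = J ∘ A_{r,s}`
    (∀ r s : Fin m, r < s → B r s = J ∘ₗ A r s) ∧
    -- `G`-orthonormality of the family `{A_{r,s}, B_{r,s} : r < s}`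
    (∀ r s : Fin m, r < s →
      -(1 / (2 * m : ℝ)) * LinearMap.trace ℝ V (A r s ∘ₗ A r s) = 1 ∧
      -(1 / (2 * m : ℝ)) * LinearMap.trace ℝ V (B r s ∘ₗ B r s) = 1) ∧
    (∀ r s r' s' : Fin m, r < s → r' < s' →
      -(1 / (2 * m : ℝ)) * LinearMap.trace ℝ V (A r s ∘ₗ B r' s') = 0) ∧
    (∀ r s r' s' : Fin m, r < s → r' < s' → (r, s) ≠ (r', s') →
      -(1 / (2 * m : ℝ)) * LinearMap.trace ℝ V (A r s ∘ₗ A r' s') = 0 ∧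
      -(1 / (2 * m : ℝ)) * LinearMap.trace ℝ V (B r s ∘ₗ B r' s') = 0) ∧
    -- the family spans the space of skew-adjoint endomorphisms anticommuting with `J`
    (∀ Q : V →ₗ[ℝ] V, (∀ x y : V, ⟪Q x, y⟫ = -⟪x, Q y⟫) → Q ∘ₗ J = -(J ∘ₗ Q) →
      Q ∈ Submodule.span ℝ
        {T : V →ₗ[ℝ] V | ∃ r s : Fin m, r < s ∧ (T = A r s ∨ T = B r s)}) := by
  have : FiniteDimensional ℝ V := e.toBasis.finiteDimensional_of_finite
  have hSw (a b) : S a b = √((2 * m : ℝ) / 2) • wedge (e a) (e b) := e.eq_smul_wedge (hS a b)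
  set c : ℝ := (√2)⁻¹ * √((2 * m : ℝ) / 2) with hc
  have hc2 : 4 * c ^ 2 = 2 * m := by
    rw [hc, mul_pow, inv_pow, Real.sq_sqrt (by positivity), Real.sq_sqrt (by positivity)]; ring
  have hAc (r s : Fin m) : A r s = c • antiWedge J (e (oddIdx r)) (e (oddIdx s)) := by
    rw [hA, hSw, hSw, ← smul_sub, wedge_oddIdx_sub_wedge_evenIdx e hJe, smul_smul]
  have hBc (r s : Fin m) : B r s = c • antiWedge J (e (oddIdx r)) (e (evenIdx s)) := by
    rw [hB, hSw, hSw, ← smul_add, wedge_oddIdx_evenIdx_add_wedge_evenIdx_oddIdx e hJ2 hJe,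
      smul_smul]
  have hBA (r s : Fin m) : B r s = J ∘ₗ A r s := by
    rw [hBc, hAc, LinearMap.comp_smul, comp_antiWedge hJ2, hJe]
  have hanti (u v : V) : (c • antiWedge J u v) ∘ₗ J = -(J ∘ₗ (c • antiWedge J u v)) := by
    rw [LinearMap.smul_comp, antiWedge_comp hJskew hJ2, LinearMap.comp_smul, smul_neg]
  have hG (hm : 0 < m) := neg_one_div_mul_trace_smul_antiWedge_comp hJskew hJ2
    (by positivity) hc2
  have hAA {r s r' s' : Fin m} (hrs : r < s) (hrs' : r' < s') :
      -(1 / (2 * m : ℝ)) * LinearMap.trace ℝ V (A r s ∘ₗ A r' s') =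
        if r = r' ∧ s = s' then 1 else 0 := by
    have hswap : ¬(r = s' ∧ s = r') := by rintro ⟨rfl, rfl⟩; exact lt_asymm hrs hrs'
    rw [hAc, hAc, hG (Fin.pos s), inner_oddIdx_antiWedge_oddIdx e hJe]
    simp [hswap]
  have hBB (r s r' s' : Fin m) : B r s ∘ₗ B r' s' = A r s ∘ₗ A r' s' := by
    rw [hBA, hBA, comp_comp_comp_of_anticomm hJ2 (hAc r s ▸ hanti _ _)]
  refine ⟨fun r s _ => ?_, fun r s _ => hBA r s, fun r s hrs => ?_, fun r s r' s' hrs _ => ?_,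
    fun r s r' s' hrs hrs' hne => ?_,
    fun Q hQ hQJ => mem_of_antiWedge_mem e hJskew hJ2 hJe ?_ hQ hQJ⟩
  · rw [hAc, hBc]
    exact ⟨(isSkewSymmetric_antiWedge _ _).smul c, hanti _ _,
      (isSkewSymmetric_antiWedge _ _).smul c, hanti _ _⟩
  · rw [hBB, hAA hrs hrs]; simp
  · rw [hAc, hBc, hG (Fin.pos s), inner_oddIdx_antiWedge_evenIdx e hJe, neg_zero]
  · simp only [ne_eq, Prod.mk.injEq] at hne
    rw [hBB, hAA hrs hrs', if_neg hne]; exact ⟨rfl, rfl⟩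
  · intro r s hrs
    have hc0 : c ≠ 0 := by rintro h; have := Fin.pos s; simp [h] at hc2; omega
    have hX : antiWedge J (e (oddIdx r)) (e (oddIdx s)) = c⁻¹ • A r s := by
      rw [hAc, smul_smul, inv_mul_cancel₀ hc0, one_smul]
    rw [hX, LinearMap.comp_smul, ← hBA]
    exact ⟨Submodule.smul_mem _ _ (Submodule.subset_span ⟨r, s, hrs, .inl rfl⟩),
      Submodule.smul_mem _ _ (Submodule.subset_span ⟨r, s, hrs, .inr rfl⟩)⟩
end
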